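/- arXiv:2205.10443 — 3 statements merged into one kernel-verified Lean document; each statement's English description precedes it below -/
import Mathlib

section
/- Let G be a Lie group that is a union of fewer than 𝔠 compact subsets, and let φ : G → S be a continuous bijective group homomorphism onto a group S that is a (possibly infinite) product of compact connected Lie groups. Then G is compact. -/
/-
`G` is locally compact, so it has an open subgroup `U` that is a countable union of compact sets
`Kₙ`. Each compact subset of `G` meets only finitely many cosets of `U`, so `U` has fewer than `𝔠`
cosets. If some `φ '' Kₙ` has interior in the compact group `∏ Sᵢ`, finitely many translates of it
cover `∏ Sᵢ`, hence finitely many translates of `Kₙ` cover `G`. Otherwise `φ '' U` is a meagre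
subgroup of a compact Hausdorff group, and a Cantor scheme in the spirit of Mycielski's theorem
produces `𝔠` points in pairwise distinct cosets of it; as `φ` is bijective, these cosets
correspond to cosets of `U`.
-/

/-- `X` is a union of fewer than `𝔠` compact subsets. -/
def SigmaCompactLtContinuum (X : Type*) [TopologicalSpace X] : Prop :=
  ∃ 𝒦 : Set (Set X), Cardinal.mk 𝒦 < Cardinal.continuum ∧
    (∀ K ∈ 𝒦, IsCompact K) ∧ ⋃₀ 𝒦 = Set.univ

universe u v

open Set Function Cardinal
open scoped Pointwise

lemma IsMeagre.exists_monotone_isClosed_cover {X : Type*} [TopologicalSpace X] {s : Set X}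
    (hs : IsMeagre s) :
    ∃ M : ℕ → Set X, Monotone M ∧ (∀ n, IsClosed (M n)) ∧ (∀ n, IsMeagre (M n)) ∧
      s ⊆ ⋃ n, M n := by
  obtain ⟨S, hSnd, hScount, hsS⟩ := isMeagre_iff_countable_union_isNowhereDense.1 hs
  obtain ⟨f, hf⟩ := (hScount.insert ∅).exists_eq_range (insert_nonempty _ _)
  have hfnd : ∀ n, IsNowhereDense (f n) := by
    intro n
    rcases (hf ▸ mem_range_self n : f n ∈ insert ∅ S) with h | h
    · exact h ▸ isNowhereDense_empty
    · exact hSnd _ h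
  refine ⟨accumulate (closure ∘ f), monotone_accumulate, fun n => ?_, fun n => ?_, ?_⟩
  · exact (finite_Iic n).isClosed_biUnion fun k _ => isClosed_closure
  · exact isMeagre_biUnion (to_countable _) fun k _ => (hfnd k).closure.isMeagre
  · rw [iUnion_accumulate]
    refine hsS.trans (sUnion_subset fun t ht => ?_)
    obtain ⟨n, rfl⟩ : t ∈ range f := hf ▸ mem_insert_of_mem _ ht
    exact subset_closure.trans (subset_iUnion (closure ∘ f) n)

lemma IsCompact.pow {M : Type*} [Monoid M] [TopologicalSpace M] [ContinuousMul M] {s : Set M}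
    (hs : IsCompact s) : ∀ n : ℕ, IsCompact (s ^ n)
  | 0 => by simp
  | n + 1 => by rw [pow_succ]; exact (hs.pow n).mul hs

lemma Subgroup.coe_closure_eq_iUnion_pow {G : Type*} [Group G] {s : Set G} (hs : s⁻¹ = s) :
    (closure s : Set G) = ⋃ n : ℕ, s ^ n := by
  refine Subset.antisymm (fun x hx => ?_)
    (iUnion_subset fun n => Submonoid.pow_subset (S := (closure s).toSubmonoid) subset_closure)
  induction hx using Subgroup.closure_induction with
  | mem x hx => exact mem_iUnion.2 ⟨1, by rwa [pow_one]⟩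
  | one => exact mem_iUnion.2 ⟨0, by simp⟩
  | mul x y _ _ hx hy =>
    obtain ⟨m, hx⟩ := mem_iUnion.1 hx
    obtain ⟨n, hy⟩ := mem_iUnion.1 hy
    exact mem_iUnion.2 ⟨m + n, by rw [pow_add]; exact mul_mem_mul hx hy⟩
  | inv x _ hx =>
    obtain ⟨n, hx⟩ := mem_iUnion.1 hx
    exact mem_iUnion.2 ⟨n, by rw [← hs, inv_pow]; exact inv_mem_inv.2 hx⟩

lemma Subgroup.lift_mk_quotient_map_of_bijective {G : Type u} {H : Type v} [Group G] [Group H]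
    {φ : G →* H} (hφ : Bijective φ) (U : Subgroup G) :
    lift.{v} #(G ⧸ U) = lift.{u} #(H ⧸ U.map φ) :=
  lift_mk_eq'.2 ⟨Quotient.congr (Equiv.ofBijective φ hφ) fun a b => by
    simp [QuotientGroup.leftRel_apply, ← map_inv, ← map_mul, Subgroup.mem_map_iff_mem hφ.1]⟩

section TopologicalGroup

variable {G : Type*} [Group G] [TopologicalSpace G] [IsTopologicalGroup G]

lemma exists_isOpen_isSigmaCompact_subgroup [LocallyCompactSpace G] :
    ∃ U : Subgroup G, IsOpen (U : Set G) ∧ IsSigmaCompact (U : Set G) := by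
  obtain ⟨C, hC, hC1⟩ := exists_compact_mem_nhds (1 : G)
  have hsymm : (C ∪ C⁻¹)⁻¹ = C ∪ C⁻¹ := by rw [union_inv, inv_inv, union_comm]
  refine ⟨Subgroup.closure (C ∪ C⁻¹), Subgroup.isOpen_of_mem_nhds _
    (Filter.mem_of_superset hC1 (subset_union_left.trans Subgroup.subset_closure)),
    fun n => (C ∪ C⁻¹) ^ n, (hC.union hC.inv).pow, (Subgroup.coe_closure_eq_iUnion_pow hsymm).symm⟩

theorem SigmaCompactLtContinuum.mk_quotient_lt_continuum (hG : SigmaCompactLtContinuum G)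
    {U : Subgroup G} (hU : IsOpen (U : Set G)) : #(G ⧸ U) < 𝔠 := by
  obtain ⟨𝒦, hcard, hcomp, hcover⟩ := hG
  have := QuotientGroup.discreteTopology hU
  have hfin : ∀ K ∈ 𝒦, (((↑) : G → G ⧸ U) '' K).Finite := fun K hK =>
    ((hcomp K hK).image QuotientGroup.continuous_mk).finite_of_discrete
  have huniv : (univ : Set (G ⧸ U)) = ⋃ K ∈ 𝒦, ((↑) : G → G ⧸ U) '' K := by
    rw [← image_univ_of_surjective QuotientGroup.mk_surjective, ← hcover, sUnion_eq_biUnion,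
      image_iUnion₂]
  calc #(G ⧸ U) = #(⋃ K ∈ 𝒦, ((↑) : G → G ⧸ U) '' K) := by rw [← huniv, mk_univ]
    _ ≤ #𝒦 * ⨆ K : 𝒦, #(((↑) : G → G ⧸ U) '' K) := mk_biUnion_le _ _
    _ ≤ #𝒦 * ℵ₀ := by gcongr; exact ciSup_le' fun K => (hfin K K.2).lt_aleph0.le
    _ < 𝔠 := mul_lt_of_lt aleph0_le_continuum hcard aleph0_lt_continuum

theorem MonoidHom.compactSpace_of_bijective_of_nonempty_interior_image {H : Type*} [Group H]
    [TopologicalSpace H] [IsTopologicalGroup H] [CompactSpace H] (φ : G →* H) (hφ : Bijective φ)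
    {K : Set G} (hK : IsCompact K) (hint : (interior (φ '' K)).Nonempty) : CompactSpace G := by
  obtain ⟨t, ht⟩ := compact_covered_by_mul_left_translates isCompact_univ hint
  let e := MulEquiv.ofBijective φ hφ
  have hcover : (univ : Set G) ⊆ ⋃ g ∈ t, (e.symm g * ·) ⁻¹' K := by
    intro x _
    obtain ⟨g, hg, k, hk, hkx⟩ := mem_iUnion₂.1 (ht (mem_univ (φ x)))
    refine mem_iUnion₂.2 ⟨g, hg, ?_⟩
    have : e.symm g * x = k := e.injective (by simp [e, hkx])
    simpa [this] using hk
  exact ⟨(t.finite_toSet.isCompact_biUnion fun g _ =>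
    (Homeomorph.mulLeft _).isCompact_preimage.2 hK).of_isClosed_subset isClosed_univ hcover⟩

end TopologicalGroup

section CompactGroup

variable {H : Type*} [Group H] [TopologicalSpace H] [IsTopologicalGroup H]

lemma isOpenMap_inv_apply_mul_apply {T : Type*} [DecidableEq T] {s t : T} (hst : s ≠ t) :
    IsOpenMap fun p : T → H => (p s)⁻¹ * p t := by
  refine IsOpenMap.of_sections fun p => ⟨fun y => update p t (p s * y), ?_, ?_, fun y => ?_⟩
  · exact (continuous_const.update t (continuous_const.mul continuous_id)).continuousAt
  · simp
  · simp [hst]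

variable [CompactSpace H] [T2Space H]

theorem exists_shrink_inv_mul_notMem {T : Type*} [Finite T] {V : T → Set H}
    (hVo : ∀ s, IsOpen (V s)) (hVne : ∀ s, (V s).Nonempty) {N : Set H} (hNc : IsClosed N)
    (hNm : IsMeagre N) :
    ∃ W : T → Set H, (∀ s, IsOpen (W s)) ∧ (∀ s, (W s).Nonempty) ∧ (∀ s, closure (W s) ⊆ V s) ∧
      ∀ s t, s ≠ t → ∀ x ∈ closure (W s), ∀ y ∈ closure (W t), x⁻¹ * y ∉ N := by
  classical
  have hcont : ∀ s t, Continuous fun p : T → H => (p s)⁻¹ * p t := fun s t => by fun_prop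
  let bad : Set (T → H) :=
    ⋃ st : {st : T × T // st.1 ≠ st.2}, (fun p => (p st.1.1)⁻¹ * p st.1.2) ⁻¹' N
  have hbad_closed : IsClosed bad := isClosed_iUnion_of_finite fun st => hNc.preimage (hcont _ _)
  have hbad_meagre : IsMeagre bad := isMeagre_iUnion fun st =>
    hNm.preimage_of_isOpenMap (hcont _ _) (isOpenMap_inv_apply_mul_apply st.2)
  have hbox : IsOpen (univ.pi V) := isOpen_set_pi finite_univ fun s _ => hVo s
  -- Baire category theorem in the compact space `T → H`
  obtain ⟨p, hp⟩ : (univ.pi V \ bad).Nonempty := by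
    by_contra h
    rw [not_nonempty_iff_eq_empty, sdiff_eq_empty] at h
    exact not_isMeagre_of_isOpen hbox (univ_pi_nonempty_iff.2 hVne) (hbad_meagre.mono h)
  obtain ⟨C, hCp, hCc, hCgood⟩ :=
    exists_mem_nhds_isClosed_subset ((hbox.sdiff hbad_closed).mem_nhds hp)
  obtain ⟨W, hW, hWC⟩ := isOpen_pi_iff'.1 isOpen_interior p (mem_interior_iff_mem_nhds.2 hCp)
  have hgood : univ.pi (fun s => closure (W s)) ⊆ univ.pi V \ bad := by
    rw [← closure_pi_set]
    exact (closure_minimal (hWC.trans interior_subset) hCc).trans hCgood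
  have hpW : p ∈ univ.pi fun s => closure (W s) := fun s _ => subset_closure (hW s).2
  refine ⟨W, fun s => (hW s).1, fun s => ⟨p s, (hW s).2⟩, fun s x hx => ?_,
    fun s t hst x hx y hy hxy => ?_⟩
  · simpa using (hgood ((update_mem_pi_iff_of_mem hpW).2 fun _ => hx)).1 s (mem_univ s)
  · have hq : update (update p s x) t y ∈ univ.pi fun s => closure (W s) :=
      (update_mem_pi_iff_of_mem ((update_mem_pi_iff_of_mem hpW).2 fun _ => hx)).2 fun _ => hy
    refine (hgood hq).2 (mem_iUnion.2 ⟨⟨(s, t), hst⟩, ?_⟩)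
    simpa [hst] using hxy

theorem exists_cantor_family_inv_mul_notMem {N : ℕ → Set H} (hmono : Monotone N)
    (hc : ∀ n, IsClosed (N n)) (hm : ∀ n, IsMeagre (N n)) :
    ∃ x : (ℕ → Bool) → H, Pairwise fun b b' => ∀ n, (x b)⁻¹ * x b' ∉ N n := by
  -- `U s` for `s : Fin m → Bool` are the `2 ^ m` sets of generation `m`; the children of `s` are
  -- the words `s'` with `Fin.init s' = s`.
  let Stage (m : ℕ) (U : (Fin m → Bool) → Set H) : Prop :=
    (∀ s, IsOpen (U s)) ∧ (∀ s, (U s).Nonempty) ∧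
      ∀ s t, s ≠ t → ∀ x ∈ closure (U s), ∀ y ∈ closure (U t), x⁻¹ * y ∉ N m
  have step : ∀ m U, Stage m U →
      ∃ U' : (Fin (m + 1) → Bool) → Set H,
        Stage (m + 1) U' ∧ ∀ s : Fin (m + 1) → Bool, closure (U' s) ⊆ U (Fin.init s) := by
    rintro m U ⟨hUo, hUne, -⟩
    obtain ⟨W, hWo, hWne, hWsub, hWsep⟩ := exists_shrink_inv_mul_notMem
      (V := fun s : Fin (m + 1) → Bool => U (Fin.init s))
      (fun s => hUo _) (fun s => hUne _) (hc (m + 1)) (hm (m + 1))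
    exact ⟨W, ⟨hWo, hWne, hWsep⟩, hWsub⟩
  choose next hnext hsub using step
  let U (m : ℕ) : {U // Stage m U} := Nat.rec
    ⟨fun _ => univ, fun _ => isOpen_univ, fun _ => univ_nonempty,
      fun s t hst => absurd (Subsingleton.elim s t) hst⟩
    (fun m U => ⟨next m U.1 U.2, hnext m U.1 U.2⟩) m
  have hbranch (b : ℕ → Bool) : (⋂ m, closure ((U m).1 fun i : Fin m => b i)).Nonempty :=
    IsCompact.nonempty_iInter_of_sequence_nonempty_isCompact_isClosed _
      (fun m => (hsub m _ _ _).trans subset_closure) (fun m => ((U m).2.2.1 _).closure)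
      isClosed_closure.isCompact fun m => isClosed_closure
  choose x hx using hbranch
  refine ⟨x, fun b b' hbb' n hN => ?_⟩
  obtain ⟨i, hi⟩ := Function.ne_iff.1 hbb'
  have hne : (fun j : Fin (max (i + 1) n) => b j) ≠ fun j : Fin (max (i + 1) n) => b' j :=
    fun h => hi (congrFun h ⟨i, by omega⟩)
  exact (U _).2.2.2 _ _ hne _ (mem_iInter.1 (hx b) _) _ (mem_iInter.1 (hx b') _)
    (hmono (le_max_right _ _) hN)

theorem Subgroup.continuum_le_mk_quotient_of_isMeagre (K : Subgroup H)
    (hK : IsMeagre (K : Set H)) : 𝔠 ≤ #(H ⧸ K) := by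
  obtain ⟨M, hmono, hc, hm, hKM⟩ := hK.exists_monotone_isClosed_cover
  obtain ⟨x, hx⟩ := exists_cantor_family_inv_mul_notMem hmono hc hm
  have hinj : Injective fun b => (x b : H ⧸ K) := by
    intro b b' h
    by_contra hne
    obtain ⟨n, hn⟩ := mem_iUnion.1 (hKM (QuotientGroup.eq.1 h))
    exact hx hne n hn
  simpa [two_power_aleph0] using lift_mk_le_lift_mk_of_injective hinj

end CompactGroup

theorem compact_of_bijective_to_product_of_compact_lie_general
    {E : Type*} [NormedAddCommGroup E] [NormedSpace ℝ E] [FiniteDimensional ℝ E]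
    {G : Type*} [TopologicalSpace G] [ChartedSpace E G] [Group G]
    [IsTopologicalGroup G]
    {ι : Type*} {F : ι → Type*}
    [∀ i, NormedAddCommGroup (F i)]
    {S : ι → Type*} [∀ i, TopologicalSpace (S i)] [∀ i, ChartedSpace (F i) (S i)]
    [∀ i, Group (S i)] [∀ i, IsTopologicalGroup (S i)]
    [∀ i, CompactSpace (S i)]
    (hG : SigmaCompactLtContinuum G)
    (φ : G →* (∀ i, S i)) (hcont : Continuous φ) (hbij : Function.Bijective φ) :
    CompactSpace G := by
  have : LocallyCompactSpace G := ChartedSpace.locallyCompactSpace E G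
  have (i : ι) : T2Space (S i) := by
    have := ChartedSpace.t1Space (F i) (S i)
    infer_instance
  obtain ⟨U, hUo, K, hK, hUK⟩ := exists_isOpen_isSigmaCompact_subgroup (G := G)
  by_cases hint : ∃ n, (interior (φ '' K n)).Nonempty
  · obtain ⟨n, hn⟩ := hint
    exact φ.compactSpace_of_bijective_of_nonempty_interior_image hbij (hK n) hn
  · have hmeagre : IsMeagre ((U.map φ : Subgroup (∀ i, S i)) : Set (∀ i, S i)) := by
      rw [Subgroup.coe_map, ← hUK, image_iUnion]
      refine isMeagre_iUnion fun n => IsNowhereDense.isMeagre ?_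
      exact ((hK n).image hcont).isClosed.isNowhereDense_iff.2
        (not_nonempty_iff_eq_empty.1 fun h => hint ⟨n, h⟩)
    have hle := (U.map φ).continuum_le_mk_quotient_of_isMeagre hmeagre
    have hlt := hG.mk_quotient_lt_continuum hUo
    rw [← lift_lt_continuum, Subgroup.lift_mk_quotient_map_of_bijective hbij] at hlt
    exact absurd (continuum_le_lift.2 hle) hlt.not_ge

theorem compact_of_bijective_to_product_of_compact_lie
    {E : Type*} [NormedAddCommGroup E] [NormedSpace ℝ E] [FiniteDimensional ℝ E]
    {G : Type*} [TopologicalSpace G] [ChartedSpace E G] [Group G]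
    [IsTopologicalGroup G] [LieGroup (modelWithCornersSelf ℝ E) (⊤ : ℕ∞) G]
    {ι : Type*} {F : ι → Type*}
    [∀ i, NormedAddCommGroup (F i)] [∀ i, NormedSpace ℝ (F i)]
    [∀ i, FiniteDimensional ℝ (F i)]
    {S : ι → Type*} [∀ i, TopologicalSpace (S i)] [∀ i, ChartedSpace (F i) (S i)]
    [∀ i, Group (S i)] [∀ i, IsTopologicalGroup (S i)]
    [∀ i, LieGroup (modelWithCornersSelf ℝ (F i)) (⊤ : ℕ∞) (S i)]
    [∀ i, CompactSpace (S i)] [∀ i, ConnectedSpace (S i)]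
    (hG : SigmaCompactLtContinuum G)
    (φ : G →* (∀ i, S i)) (hcont : Continuous φ) (hbij : Function.Bijective φ) :
    CompactSpace G :=
  compact_of_bijective_to_product_of_compact_lie_general (E := E) (F := F) hG φ hcont hbij
end

section
/- Let G and H be locally compact Hausdorff groups such that G is a union of fewer than 𝔠 compact subsets and H is almost connected (H/H₀ compact). Then every continuous bijective group homomorphism φ : G → H is an isomorphism of topological groups. -/
/-!
Fix an open σ-compact subgroup `U` of `G`. As `G ⧸ U` is discrete, each compact set meets only
finitely many cosets, so `[G : U] < 𝔠`; and `φ` identifies `G ⧸ U` with `H ⧸ φ(U)`. The subgroup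
`φ(U)` is σ-compact. If it had empty interior it would be meagre, and a Cantor scheme in the
locally compact space `H` (Mycielski's argument) would give `𝔠` points no two of which differ by
an element of `φ(U)`, so `[H : φ(U)] ≥ 𝔠`. Hence `φ(U)` is open; it then contains `H₀`, so it
has finite index because `H ⧸ H₀` is compact. So `U` has finite index in `G`, `G` is σ-compact,
and the open mapping theorem for σ-compact groups makes `φ` open.
-/

open Set Function Cardinal Topology Pointwise

section Mycielski

variable {X : Type*} [TopologicalSpace X]

theorem IsMeagre.exists_isClosed_cover {s : Set X} (hs : IsMeagre s) :
    ∃ C : ℕ → Set X, (∀ n, IsClosed (C n)) ∧ (∀ n, interior (C n) = ∅) ∧ s ⊆ ⋃ n, C n := by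
  obtain ⟨S, hSnd, hSc, hsS⟩ := isMeagre_iff_countable_union_isNowhereDense.1 hs
  -- `∅` is added so that the family is nonempty and can be enumerated by `ℕ`.
  obtain ⟨f, hf⟩ := (hSc.insert ∅).exists_eq_range (insert_nonempty _ _)
  have hfnd : ∀ n, IsNowhereDense (f n) := by
    intro n
    rcases (hf ▸ mem_range_self n : f n ∈ insert ∅ S) with h | h
    · exact h ▸ isNowhereDense_empty
    · exact hSnd _ h
  refine ⟨fun n => closure (f n), fun n => isClosed_closure, hfnd, ?_⟩
  calc s ⊆ ⋃₀ insert ∅ S := hsS.trans (sUnion_mono (subset_insert _ _))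
    _ = ⋃ n, f n := by rw [hf, sUnion_range]
    _ ⊆ ⋃ n, closure (f n) := iUnion_mono fun n => subset_closure

theorem IsOpenMap.isMeagre_preimage {Y : Type*} [TopologicalSpace Y] {f : X → Y}
    (hfo : IsOpenMap f) (hfc : Continuous f) {s : Set Y} (hs : IsMeagre s) :
    IsMeagre (f ⁻¹' s) := by
  obtain ⟨C, hC, hC', hsC⟩ := hs.exists_isClosed_cover
  refine IsMeagre.mono (preimage_mono hsC) ?_
  rw [preimage_iUnion]
  refine isMeagre_iUnion fun n => IsNowhereDense.isMeagre ?_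
  rw [((hC n).preimage hfc).isNowhereDense_iff,
    ← hfo.preimage_interior_eq_interior_preimage hfc, hC' n, preimage_empty]

theorem IsSigmaCompact.isMeagre_of_interior_eq_empty [T2Space X] {s : Set X}
    (hs : IsSigmaCompact s) (h : interior s = ∅) : IsMeagre s := by
  obtain ⟨K, hK, rfl⟩ := hs
  refine isMeagre_iUnion fun n => IsNowhereDense.isMeagre ?_
  rw [(hK n).isClosed.isNowhereDense_iff]
  exact subset_empty_iff.1 (h ▸ interior_mono (subset_iUnion K n))

theorem exists_open_prod_disjoint_of_interior_eq_empty {r : Set (X × X)} (hr : IsClosed r)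
    (hr' : interior r = ∅) {U W : Set X} (hU : IsOpen U ∧ U.Nonempty)
    (hW : IsOpen W ∧ W.Nonempty) :
    ∃ U' ⊆ U, ∃ W' ⊆ W, (IsOpen U' ∧ U'.Nonempty) ∧ (IsOpen W' ∧ W'.Nonempty) ∧
      Disjoint (U' ×ˢ W') r := by
  obtain ⟨⟨u, w⟩, huw, huwr⟩ : ∃ p ∈ U ×ˢ W, p ∉ r := by
    by_contra! h
    obtain ⟨p, hp⟩ := hU.2.prod hW.2
    simpa [hr'] using interior_maximal h (hU.1.prod hW.1) hp
  obtain ⟨U', W', hU'o, hW'o, hu, hw, hsub⟩ :=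
    isOpen_prod_iff.1 ((hU.1.prod hW.1).inter hr.isOpen_compl) u w ⟨huw, huwr⟩
  refine ⟨U' ∩ U, inter_subset_right, W' ∩ W, inter_subset_right,
    ⟨hU'o.inter hU.1, u, hu, huw.1⟩, ⟨hW'o.inter hW.1, w, hw, huw.2⟩, ?_⟩
  exact disjoint_compl_left.mono_left <|
    (prod_mono inter_subset_left inter_subset_left).trans (hsub.trans inter_subset_right)

theorem exists_le_disjoint_prod_of_interior_eq_empty {ι : Type*} [DecidableEq ι]
    {r : Set (X × X)} (hr : IsClosed r) (hr' : interior r = ∅) {A : ι → Set X}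
    (hA : ∀ k, IsOpen (A k) ∧ (A k).Nonempty) {i j : ι} (hij : i ≠ j) :
    ∃ B ≤ A, (∀ k, IsOpen (B k) ∧ (B k).Nonempty) ∧ Disjoint (B i ×ˢ B j) r := by
  obtain ⟨U, hUA, W, hWA, hU, hW, hUW⟩ :=
    exists_open_prod_disjoint_of_interior_eq_empty hr hr' (hA i) (hA j)
  refine ⟨update (update A i U) j W, fun k => ?_, fun k => ?_, ?_⟩
  · rcases eq_or_ne k j with rfl | hkj
    · simpa using hWA
    rcases eq_or_ne k i with rfl | hki
    · simpa [hkj] using hUA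
    · simp [hkj, hki]
  · rcases eq_or_ne k j with rfl | hkj
    · simpa using hW
    rcases eq_or_ne k i with rfl | hki
    · simpa [hkj] using hU
    · simpa [hkj, hki] using hA k
  · simpa [hij] using hUW

theorem exists_le_pairwise_disjoint_prod_of_interior_eq_empty {ι κ : Type*} [Finite ι]
    [Finite κ] {r : κ → Set (X × X)} (hr : ∀ m, IsClosed (r m)) (hr' : ∀ m, interior (r m) = ∅)
    {A : ι → Set X} (hA : ∀ i, IsOpen (A i) ∧ (A i).Nonempty) :
    ∃ B ≤ A, (∀ i, IsOpen (B i) ∧ (B i).Nonempty) ∧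
      ∀ i j, i ≠ j → ∀ m, Disjoint (B i ×ˢ B j) (r m) := by
  classical
  have := Fintype.ofFinite (ι × ι × κ)
  suffices ∀ T : Finset (ι × ι × κ), ∃ B ≤ A, (∀ i, IsOpen (B i) ∧ (B i).Nonempty) ∧
      ∀ t ∈ T, t.1 ≠ t.2.1 → Disjoint (B t.1 ×ˢ B t.2.1) (r t.2.2) by
    obtain ⟨B, hBA, hB, hdisj⟩ := this Finset.univ
    exact ⟨B, hBA, hB, fun i j hij m => hdisj (i, j, m) (Finset.mem_univ _) hij⟩
  intro T
  induction T using Finset.induction_on with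
  | empty => exact ⟨A, le_rfl, hA, by simp⟩
  | insert t T _ ih =>
    obtain ⟨B, hBA, hB, hdisj⟩ := ih
    by_cases ht : t.1 = t.2.1
    · exact ⟨B, hBA, hB, by simpa [ht] using hdisj⟩
    obtain ⟨B', hB'B, hB', hdisj'⟩ :=
      exists_le_disjoint_prod_of_interior_eq_empty (hr t.2.2) (hr' t.2.2) hB ht
    refine ⟨B', hB'B.trans hBA, hB', ?_⟩
    rintro s hs hs'
    rcases Finset.mem_insert.1 hs with rfl | hs
    · exact hdisj'
    · exact (hdisj s hs hs').mono_left (prod_mono (hB'B _) (hB'B _))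

theorem exists_branch_of_cantor_levels {L : ∀ n, (Fin n → Bool) → Set X}
    (hne : ∀ n s, (L n s).Nonempty) (hcpt : ∀ n s, IsCompact (closure (L (n + 1) s)))
    (hsub : ∀ n s, closure (L (n + 1) s) ⊆ L n (Fin.init s)) :
    ∃ x : (ℕ → Bool) → X, ∀ σ n, x σ ∈ L n fun i => σ i := by
  have hanti (σ : ℕ → Bool) (n : ℕ) :
      closure (L (n + 2) fun i => σ i) ⊆ closure (L (n + 1) fun i => σ i) :=
    (hsub (n + 1) _).trans subset_closure
  choose x hx using fun σ : ℕ → Bool =>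
    IsCompact.nonempty_iInter_of_sequence_nonempty_isCompact_isClosed
      (fun n => closure (L (n + 1) fun i => σ i)) (hanti σ)
      (fun n => (hne _ _).mono subset_closure) (hcpt 0 _) fun n => isClosed_closure
  exact ⟨x, fun σ n => hsub n _ (mem_iInter.1 (hx σ) n)⟩

variable [LocallyCompactSpace X] [RegularSpace X]

theorem exists_open_nonempty_isCompact_closure_subset {U : Set X}
    (hU : IsOpen U ∧ U.Nonempty) :
    ∃ V, (IsOpen V ∧ V.Nonempty) ∧ IsCompact (closure V) ∧ closure V ⊆ U := by
  obtain ⟨x, hx⟩ := hU.2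
  obtain ⟨V, hVo, hxV, hVU, hVc⟩ :=
    exists_open_between_and_isCompact_closure isCompact_singleton hU.1
      (singleton_subset_iff.2 hx)
  exact ⟨V, ⟨hVo, x, hxV rfl⟩, hVc, hVU⟩

section CantorScheme

variable {r : ℕ → Set (X × X)}

theorem exists_cantor_level_succ (hr : ∀ m, IsClosed (r m)) (hr' : ∀ m, interior (r m) = ∅)
    {n : ℕ} {L : (Fin n → Bool) → Set X} (hL : ∀ s, IsOpen (L s) ∧ (L s).Nonempty) :
    ∃ L' : (Fin (n + 1) → Bool) → Set X, (∀ s, IsOpen (L' s) ∧ (L' s).Nonempty) ∧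
      (∀ s, IsCompact (closure (L' s))) ∧ (∀ s, closure (L' s) ⊆ L (Fin.init s)) ∧
      ∀ s t, s ≠ t → ∀ m < n + 1, Disjoint (L' s ×ˢ L' t) (r m) := by
  obtain ⟨B, hBL, hB, hdisj⟩ := exists_le_pairwise_disjoint_prod_of_interior_eq_empty
    (r := fun m : Fin (n + 1) => r m) (fun m => hr m) (fun m => hr' m)
    fun s : Fin (n + 1) → Bool => hL (Fin.init s)
  choose L' hL' hcpt hsub using fun s => exists_open_nonempty_isCompact_closure_subset (hB s)
  refine ⟨L', hL', hcpt, fun s => (hsub s).trans (hBL s), fun s t hst m hm => ?_⟩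
  exact (hdisj s t hst ⟨m, hm⟩).mono_left <|
    prod_mono (subset_closure.trans (hsub s)) (subset_closure.trans (hsub t))

theorem exists_cantor_levels (hr : ∀ m, IsClosed (r m)) (hr' : ∀ m, interior (r m) = ∅)
    [Nonempty X] :
    ∃ L : ∀ n, (Fin n → Bool) → Set X, (∀ n s, IsOpen (L n s) ∧ (L n s).Nonempty) ∧
      (∀ n s, IsCompact (closure (L (n + 1) s))) ∧
      (∀ n s, closure (L (n + 1) s) ⊆ L n (Fin.init s)) ∧
      ∀ n s t, s ≠ t → ∀ m < n, Disjoint (L n s ×ˢ L n t) (r m) := by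
  choose next hnext using
    fun n (L : {L : (Fin n → Bool) → Set X // ∀ s, IsOpen (L s) ∧ (L s).Nonempty}) =>
      exists_cantor_level_succ hr hr' L.2
  let L : ∀ n, {L : (Fin n → Bool) → Set X // ∀ s, IsOpen (L s) ∧ (L s).Nonempty} := fun n =>
    Nat.rec ⟨fun _ => univ, fun _ => ⟨isOpen_univ, univ_nonempty⟩⟩
      (fun n L => ⟨next n L, (hnext n L).1⟩) n
  refine ⟨fun n => (L n).1, fun n => (L n).2, fun n => (hnext n (L n)).2.1,
    fun n => (hnext n (L n)).2.2.1, ?_⟩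
  rintro (_ | n) s t hst m hm
  · exact absurd hm (Nat.not_lt_zero m)
  · exact (hnext n (L n)).2.2.2 s t hst m hm

end CantorScheme

theorem IsMeagre.exists_nat_bool_family_notMem [Nonempty X] {R : Set (X × X)}
    (hR : IsMeagre R) :
    ∃ x : (ℕ → Bool) → X, ∀ σ τ, σ ≠ τ → (x σ, x τ) ∉ R := by
  obtain ⟨r, hr, hr', hRr⟩ := hR.exists_isClosed_cover
  obtain ⟨L, hL, hcpt, hsub, hdisj⟩ := exists_cantor_levels hr hr'
  obtain ⟨x, hx⟩ := exists_branch_of_cantor_levels (fun n s => (hL n s).2) hcpt hsub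
  refine ⟨x, fun σ τ hστ hR => ?_⟩
  obtain ⟨m, hm⟩ := mem_iUnion.1 (hRr hR)
  obtain ⟨i, hi⟩ := ne_iff.1 hστ
  -- At level `max i m + 1` the words of `σ` and `τ` differ and `r m` is already avoided.
  have hne : (fun j : Fin (max i m + 1) => σ j) ≠ fun j : Fin (max i m + 1) => τ j :=
    fun h => hi (congrFun h ⟨i, by omega⟩)
  exact (hdisj _ _ _ hne m (by omega)).notMem_of_mem_left ⟨hx σ _, hx τ _⟩ hm

end Mycielski

theorem SigmaCompactLtContinuum.of_surjective {X Y : Type*} [TopologicalSpace X]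
    [TopologicalSpace Y] (hX : SigmaCompactLtContinuum X) {f : X → Y} (hf : Continuous f)
    (hfs : Surjective f) : SigmaCompactLtContinuum Y := by
  obtain ⟨𝒦, hcard, hK, hcover⟩ := hX
  refine ⟨image f '' 𝒦, ?_, ?_, ?_⟩
  · exact lift_lt_continuum.1 <| mk_image_le_lift.trans_lt (lift_lt_continuum.2 hcard)
  · rintro _ ⟨K, hK𝒦, rfl⟩
    exact (hK K hK𝒦).image hf
  · rw [← image_sUnion, hcover, image_univ_of_surjective hfs]

theorem SigmaCompactLtContinuum.mk_lt_continuum {X : Type*} [TopologicalSpace X]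
    [DiscreteTopology X] (hX : SigmaCompactLtContinuum X) : #X < 𝔠 := by
  obtain ⟨𝒦, hcard, hK, hcover⟩ := hX
  calc #X = #(⋃₀ 𝒦) := by rw [hcover, mk_univ]
    _ ≤ #𝒦 * ⨆ K : 𝒦, #K := mk_sUnion_le 𝒦
    _ ≤ #𝒦 * ℵ₀ := by
      gcongr
      exact ciSup_le' fun K => (hK K K.2).finite_of_discrete.lt_aleph0.le
    _ < 𝔠 := mul_lt_of_lt aleph0_le_continuum hcard aleph0_lt_continuum

section TopologicalGroup

variable {G : Type*} [TopologicalSpace G] [Group G] [IsTopologicalGroup G]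

variable (G) in
theorem exists_isOpen_subgroup_isSigmaCompact [WeaklyLocallyCompactSpace G] :
    ∃ U : Subgroup G, IsOpen (U : Set G) ∧ IsSigmaCompact (U : Set G) := by
  obtain ⟨K, hK, hK1⟩ := exists_compact_mem_nhds (1 : G)
  set S := K ∪ K⁻¹
  have hS : ∀ n : ℕ, IsCompact (S ^ n) := by
    intro n
    induction n with
    | zero => simp
    | succ n ih => simpa [pow_succ] using ih.mul (hK.union hK.inv)
  have hSinv : S⁻¹ = S := by simp [S, union_comm]
  have hcl : (Subgroup.closure S : Set G) = ⋃ n : ℕ, S ^ n := by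
    refine subset_antisymm ?_ (iUnion_subset fun n => Subgroup.pow_subset Subgroup.subset_closure)
    intro x hx
    induction hx using Subgroup.closure_induction with
    | mem x hx => exact mem_iUnion.2 ⟨1, by simpa using hx⟩
    | one => exact mem_iUnion.2 ⟨0, by simp⟩
    | mul x y _ _ hx hy =>
      obtain ⟨⟨m, hx⟩, ⟨n, hy⟩⟩ := And.intro (mem_iUnion.1 hx) (mem_iUnion.1 hy)
      exact mem_iUnion.2 ⟨m + n, pow_add S m n ▸ mul_mem_mul hx hy⟩
    | inv x _ hx =>
      obtain ⟨n, hx⟩ := mem_iUnion.1 hx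
      exact mem_iUnion.2 ⟨n, by rwa [← hSinv, inv_pow, Set.mem_inv, inv_inv]⟩
  refine ⟨Subgroup.closure S, Subgroup.isOpen_of_mem_nhds _ (g := 1) ?_, ?_⟩
  · exact Filter.mem_of_superset hK1 (subset_union_left.trans Subgroup.subset_closure)
  · rw [hcl]
    exact isSigmaCompact_iUnion_of_isCompact _ hS

theorem sigmaCompactSpace_of_finite_quotient {U : Subgroup G} (hU : IsSigmaCompact (U : Set G))
    [Finite (G ⧸ U)] : SigmaCompactSpace G := by
  rw [← isSigmaCompact_univ_iff, QuotientGroup.univ_eq_iUnion_smul]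
  exact isSigmaCompact_iUnion _ fun q => by
    simpa only [image_smul] using hU.image (continuous_const_smul q.out)

theorem Subgroup.connectedComponentOfOne_le_of_isOpen {V : Subgroup G}
    (hV : IsOpen (V : Set G)) : Subgroup.connectedComponentOfOne G ≤ V :=
  fun _ hx => IsClopen.connectedComponent_subset ⟨V.isClosed_of_isOpen hV, hV⟩ V.one_mem hx

theorem Subgroup.finite_quotient_of_isOpen_of_le {N V : Subgroup G} (hNV : N ≤ V)
    [CompactSpace (G ⧸ N)] (hV : IsOpen (V : Set G)) : Finite (G ⧸ V) := by
  have : DiscreteTopology (G ⧸ V) := QuotientGroup.discreteTopology hV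
  have : CompactSpace (G ⧸ V) := by
    have hsurj : Surjective (Subgroup.quotientMapOfLE hNV) :=
      Quotient.ind' fun g => ⟨QuotientGroup.mk g, rfl⟩
    rw [← isCompact_univ_iff, ← hsurj.range_eq, ← image_univ]
    exact isCompact_univ.image (continuous_id.quotient_map' _)
  exact finite_of_compact_of_discrete

theorem Subgroup.continuum_le_mk_quotient_of_isMeagre_s15 [LocallyCompactSpace G] {V : Subgroup G}
    (hV : IsMeagre (V : Set G)) : 𝔠 ≤ #(G ⧸ V) := by
  -- `(a, b) ↦ a⁻¹ * b` is `Prod.snd` after the shear homeomorphism `(a, b) ↦ (a, a⁻¹ * b)`.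
  have hopen : IsOpenMap fun p : G × G => p.1⁻¹ * p.2 :=
    isOpenMap_snd.comp (Homeomorph.shearMulRight G).symm.isOpenMap
  obtain ⟨x, hx⟩ := (hopen.isMeagre_preimage (by fun_prop) hV).exists_nat_bool_family_notMem
  have hinj : Injective fun σ => (x σ : G ⧸ V) := by
    intro σ τ hστ
    by_contra hne
    exact hx σ τ hne (QuotientGroup.eq.1 hστ)
  simpa [← two_power_aleph0] using lift_mk_le_lift_mk_of_injective hinj

end TopologicalGroup

noncomputable def QuotientGroup.equivMapOfBijective {G H : Type*} [Group G] [Group H]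
    (φ : G →* H) (hφ : Bijective φ) (U : Subgroup G) : G ⧸ U ≃ H ⧸ U.map φ :=
  Quotient.congr (Equiv.ofBijective φ hφ) fun a b => by
    rw [QuotientGroup.leftRel_apply, QuotientGroup.leftRel_apply, Equiv.ofBijective_apply,
      Equiv.ofBijective_apply, ← map_inv, ← map_mul, Subgroup.mem_map_iff_mem hφ.1]

theorem iso_of_bijective_to_almost_connected_general
    {G : Type*} [TopologicalSpace G] [Group G] [IsTopologicalGroup G]
    [LocallyCompactSpace G]
    {H : Type*} [TopologicalSpace H] [Group H] [IsTopologicalGroup H]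
    [LocallyCompactSpace H] [T2Space H]
    (hG : SigmaCompactLtContinuum G)
    (hH : CompactSpace (H ⧸ Subgroup.connectedComponentOfOne H))
    (φ : G →* H) (hcont : Continuous φ) (hbij : Function.Bijective φ) :
    ∃ e : G ≃ₜ H, ⇑e = ⇑φ := by
  obtain ⟨U, hUo, hUσ⟩ := exists_isOpen_subgroup_isSigmaCompact G
  set V := U.map φ
  let e : G ⧸ U ≃ H ⧸ V := QuotientGroup.equivMapOfBijective φ hbij U
  have hVσ : IsSigmaCompact (V : Set H) := hUσ.image hcont
  have : DiscreteTopology (G ⧸ U) := QuotientGroup.discreteTopology hUo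
  have hGU : #(G ⧸ U) < 𝔠 :=
    (hG.of_surjective QuotientGroup.continuous_mk QuotientGroup.mk_surjective).mk_lt_continuum
  have : Finite (G ⧸ U) := by
    by_cases hV : interior (V : Set H) = ∅
    · have hHV := Subgroup.continuum_le_mk_quotient_of_isMeagre_s15
        (hVσ.isMeagre_of_interior_eq_empty hV)
      refine absurd hHV (not_le.2 ?_)
      rwa [← lift_lt_continuum, ← mk_congr_lift e, lift_lt_continuum]
    · obtain ⟨_, hh⟩ := nonempty_iff_ne_empty.2 hV
      have hVo := V.isOpen_of_mem_nhds (mem_interior_iff_mem_nhds.1 hh)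
      have := Subgroup.finite_quotient_of_isOpen_of_le
        (Subgroup.connectedComponentOfOne_le_of_isOpen hVo) hVo
      exact .of_equiv _ e.symm
  have : SigmaCompactSpace G := sigmaCompactSpace_of_finite_quotient hUσ
  exact ⟨(Equiv.ofBijective φ hbij).toHomeomorphOfContinuousOpen hcont
    (φ.isOpenMap_of_sigmaCompact hbij.2 hcont), rfl⟩

theorem iso_of_bijective_to_almost_connected
    {G : Type*} [TopologicalSpace G] [Group G] [IsTopologicalGroup G]
    [LocallyCompactSpace G] [T2Space G]
    {H : Type*} [TopologicalSpace H] [Group H] [IsTopologicalGroup H]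
    [LocallyCompactSpace H] [T2Space H]
    (hG : SigmaCompactLtContinuum G)
    (hH : CompactSpace (H ⧸ Subgroup.connectedComponentOfOne H))
    (φ : G →* H) (hcont : Continuous φ) (hbij : Function.Bijective φ) :
    ∃ e : G ≃ₜ H, ⇑e = ⇑φ :=
  iso_of_bijective_to_almost_connected_general hG hH φ hcont hbij
end

section
/- Let G and H be locally compact Hausdorff groups, each a union of fewer than 𝔠 compact subsets, and let φ : G → H be a group homomorphism. Then φ is continuous if and only if its graph {(g, φ(g)) : g ∈ G} is closed in G × H. -/
open Set Filter Topology Pointwise Cardinal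

theorem Cardinal.mk_lt_continuum_of_countable_cover {α : Type*} {ι : Type*} (s : ι → Set α)
    (hs : ∀ i, (s i).Countable) (hcover : ∀ a, ∃ i, a ∈ s i) (hι : #ι < 𝔠) : #α < 𝔠 := by
  have hunion : ⋃ i, s i = Set.univ := Set.eq_univ_of_forall fun a => mem_iUnion.2 (hcover a)
  have hle := mk_iUnion_le_lift s
  rw [hunion, mk_univ] at hle
  rw [← lift_lt_continuum]
  calc _ ≤ _ := hle
    _ ≤ lift #ι * ℵ₀ := by
      gcongr
      exact ciSup_le' fun i => lift_le_aleph0.2 (mk_le_aleph0_iff.2 (hs i).to_subtype)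
    _ < 𝔠 := mul_lt_of_lt aleph0_le_continuum (lift_lt_continuum.2 hι) aleph0_lt_continuum

theorem continuousAt_of_isClosed_graph {X Y : Type*} [TopologicalSpace X] [TopologicalSpace Y]
    {f : X → Y} (hf : IsClosed {p : X × Y | p.2 = f p.1}) {x : X} {t : Set Y} (ht : IsCompact t)
    (hxt : ∀ᶠ z in 𝓝 x, f z ∈ t) : ContinuousAt f x := by
  refine ht.tendsto_nhds_of_unique_mapClusterPt hxt fun y _ hy => ?_
  have hxy : MapClusterPt (x, y) (𝓝 x) fun z => (z, f z) := by
    rw [((𝓝 x).basis_sets.prod_nhds (𝓝 y).basis_sets).mapClusterPt_iff_frequently]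
    rintro ⟨s, s'⟩ ⟨hs, hs'⟩
    exact ((mapClusterPt_iff_frequently.1 hy s' hs').and_eventually hs).mono
      fun z hz => ⟨hz.2, hz.1⟩
  exact hf.mem_of_mapClusterPt hxy (Eventually.of_forall fun z => rfl)

theorem MonoidHom.continuous_of_continuousAt {G H : Type*} [TopologicalSpace G] [Group G]
    [IsTopologicalGroup G] [TopologicalSpace H] [Group H] [IsTopologicalGroup H] (φ : G →* H)
    {x : G} (hx : ContinuousAt φ x) : Continuous φ := by
  refine continuous_of_continuousAt_one φ ?_
  have h : ContinuousAt (fun g => (φ x)⁻¹ * φ (x * g)) 1 :=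
    continuousAt_const.mul (hx.comp_of_eq (continuous_const_mul x).continuousAt (mul_one x))
  simpa using h

theorem IsCompact.inter_preimage_of_isClosed_graph {X Y : Type*} [TopologicalSpace X]
    [TopologicalSpace Y] {f : X → Y} {K : Set X} {L : Set Y} (hK : IsCompact K)
    (hf : IsClosed {p : X × Y | p.2 = f p.1}) (hL : IsCompact L) : IsCompact (K ∩ f ⁻¹' L) := by
  convert ((hK.prod hL).inter_left hf).image continuous_fst using 1
  ext x
  constructor
  · rintro ⟨hx, hfx⟩
    exact ⟨(x, f x), ⟨rfl, hx, hfx⟩, rfl⟩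
  · rintro ⟨⟨x, y⟩, ⟨hy, hx, hy'⟩, rfl⟩
    exact ⟨hx, show f x ∈ L from (hy : y = f x) ▸ hy'⟩

section Pow

variable {G : Type*} [Group G]

theorem Subgroup.coe_closure_subset_iUnion_pow {V : Set G} (hV : V⁻¹ = V) :
    (closure V : Set G) ⊆ ⋃ n : ℕ, V ^ n := by
  intro x hx
  induction hx using Subgroup.closure_induction with
  | mem x hx => exact mem_iUnion.2 ⟨1, by simpa using hx⟩
  | one => exact mem_iUnion.2 ⟨0, by simp⟩
  | mul x y _ _ hx hy =>
    obtain ⟨m, hm⟩ := mem_iUnion.1 hx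
    obtain ⟨n, hn⟩ := mem_iUnion.1 hy
    exact mem_iUnion.2 ⟨m + n, pow_add V m n ▸ mul_mem_mul hm hn⟩
  | inv x _ hx =>
    obtain ⟨n, hn⟩ := mem_iUnion.1 hx
    exact mem_iUnion.2 ⟨n, by rw [← hV, inv_pow]; exact inv_mem_inv.2 hn⟩

variable [TopologicalSpace G] [IsTopologicalGroup G]

theorem IsCompact.pow_s16 {V : Set G} (hV : IsCompact V) (n : ℕ) : IsCompact (V ^ n) := by
  induction n with
  | zero => simp
  | succ n ih => rw [pow_succ]; exact ih.mul hV

end Pow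

theorem exists_isCompact_inv_eq_mem_nhds_one (G : Type*) [TopologicalSpace G] [Group G]
    [IsTopologicalGroup G] [WeaklyLocallyCompactSpace G] :
    ∃ K : Set G, K ∈ 𝓝 1 ∧ IsCompact K ∧ K⁻¹ = K := by
  obtain ⟨K₀, hK₀c, hK₀⟩ := exists_compact_mem_nhds (1 : G)
  obtain ⟨K, hK, hKc, hKinv, hKK⟩ := exists_closed_nhds_one_inv_eq_mul_subset hK₀
  have hKK₀ : K ⊆ K₀ := fun x hx => hKK ⟨x, hx, 1, mem_of_mem_nhds hK, mul_one x⟩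
  exact ⟨K, hK, hK₀c.of_isClosed_subset hKc hKK₀, hKinv⟩

section Cosets

variable {G H : Type*} [TopologicalSpace G] [Group G] [IsTopologicalGroup G]
  [TopologicalSpace H] [Group H] [IsTopologicalGroup H]

theorem finite_image_mk_fst_of_isCompact (φ : G →* H) {S : Subgroup G} {K : Set G} {L : Set H}
    (hK : K ∈ 𝓝 1) (hL : L ∈ 𝓝 1) (hKL : K ∩ φ ⁻¹' L ⊆ S) {C : Set (G × H)}
    (hC : IsCompact C) (hCφ : ∀ p ∈ C, p.2 = φ p.1) :
    ((fun p : G × H => (p.1 : G ⧸ S)) '' C).Finite := by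
  obtain ⟨t, htC, hCt⟩ := hC.elim_nhds_subcover (fun p => p • K ×ˢ L) fun p _ =>
    smul_mem_nhds_self.2 (prod_mem_nhds hK hL)
  refine (t.finite_toSet.image fun p : G × H => (p.1 : G ⧸ S)).subset ?_
  rintro _ ⟨q, hq, rfl⟩
  obtain ⟨p, hp, hqp⟩ := mem_iUnion₂.1 (hCt hq)
  rw [mem_smul_set_iff_inv_smul_mem] at hqp
  refine ⟨p, hp, QuotientGroup.eq.2 (hKL ⟨hqp.1, ?_⟩)⟩
  simpa [hCφ p (htC p hp), hCφ q hq] using hqp.2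

theorem mk_quotient_lt_continuum_of_isClosed_graph {φ : G →* H}
    (hφ : IsClosed {p : G × H | p.2 = φ p.1}) (hG : SigmaCompactLtContinuum G)
    (hH : SigmaCompactLtContinuum H) {S : Subgroup G}
    {K : Set G} {L : Set H} (hK : K ∈ 𝓝 1) (hL : L ∈ 𝓝 1) (hKL : K ∩ φ ⁻¹' L ⊆ S) :
    #(G ⧸ S) < 𝔠 := by
  obtain ⟨𝒦, h𝒦, h𝒦c, h𝒦G⟩ := hG
  obtain ⟨ℒ, hℒ, hℒc, hℒH⟩ := hH
  refine mk_lt_continuum_of_countable_cover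
    (fun P : 𝒦 × ℒ => (fun p : G × H => (p.1 : G ⧸ S)) ''
      ({p : G × H | p.2 = φ p.1} ∩ (P.1 : Set G) ×ˢ (P.2 : Set H)))
    (fun P => (finite_image_mk_fst_of_isCompact φ hK hL hKL
      (((h𝒦c _ P.1.2).prod (hℒc _ P.2.2)).inter_left hφ) fun p hp => hp.1).countable)
    (fun a => ?_) ?_
  · obtain ⟨g, rfl⟩ := QuotientGroup.mk_surjective a
    obtain ⟨K', hK', hgK'⟩ := mem_sUnion.1 (h𝒦G.symm ▸ mem_univ g)
    obtain ⟨L', hL', hgL'⟩ := mem_sUnion.1 (hℒH.symm ▸ mem_univ (φ g))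
    exact ⟨(⟨K', hK'⟩, ⟨L', hL'⟩), (g, φ g), ⟨rfl, hgK', hgL'⟩, rfl⟩
  · rw [mk_prod]
    exact mul_lt_of_lt aleph0_le_continuum (lift_lt_continuum.2 h𝒦) (lift_lt_continuum.2 hℒ)

end Cosets

section Scheme

variable {G : Type*} [TopologicalSpace G] [Group G]

/-- Level `n` of a Cantor scheme. Its pieces are indexed by branches `b : ℕ → Bool` but depend
only on the first `n` bits, so they stand for the binary words of length `n`. -/
structure IsSeparatingScheme (A : ℕ → Set G) (n : ℕ) (F : (ℕ → Bool) → Set G) : Prop where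
  isCompact : ∀ b, IsCompact (F b)
  interior_nonempty : ∀ b, (interior (F b)).Nonempty
  eq_of_eqOn : ∀ b b', (∀ i < n, b i = b' i) → F b = F b'
  inv_mul_notMem : ∀ b b', (∃ i < n, b i ≠ b' i) → ∀ x ∈ F b, ∀ y ∈ F b', x⁻¹ * y ∉ A n

theorem exists_isSeparatingScheme_zero [WeaklyLocallyCompactSpace G] (A : ℕ → Set G) :
    ∃ F, IsSeparatingScheme A 0 F := by
  obtain ⟨C, hCc, hC⟩ := exists_compact_mem_nhds (1 : G)
  exact ⟨fun _ => C, ⟨fun _ => hCc, fun _ => ⟨1, mem_interior_iff_mem_nhds.2 hC⟩,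
    fun _ _ _ => rfl, fun _ _ ⟨_, hi, _⟩ => absurd hi (Nat.not_lt_zero _)⟩⟩

variable [IsTopologicalGroup G]

theorem isOpenMap_inv_mul_apply {ι : Type*} {i j : ι} (hij : i ≠ j) :
    IsOpenMap fun u : ι → G => (u i)⁻¹ * u j := by
  classical
  refine IsOpenMap.of_sections fun u =>
    ⟨fun g => Function.update u j (u i * g), ?_, by simp, fun g => ?_⟩
  · exact (continuous_const.update j (continuous_const_mul (u i))).continuousAt
  · simp [Function.update_of_ne hij]

variable [LocallyCompactSpace G]

theorem exists_pairwise_inv_mul_notMem {ι : Type*} [Finite ι] {U : ι → Set G}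
    (hU : ∀ i, IsOpen (U i)) (hU' : ∀ i, (U i).Nonempty) {D : Set G} (hD : IsMeagre D) :
    ∃ u : ι → G, (∀ i, u i ∈ U i) ∧ Pairwise fun i j => (u i)⁻¹ * u j ∉ D := by
  set B := ⋃ p : {p : ι × ι // p.1 ≠ p.2}, (fun u : ι → G => (u p.1.1)⁻¹ * u p.1.2) ⁻¹' D
  have hB : IsMeagre B := isMeagre_iUnion fun p =>
    hD.preimage_of_isOpenMap (by fun_prop) (isOpenMap_inv_mul_apply p.2)
  have hUB : ¬ Set.pi univ U ⊆ B := fun h =>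
    not_isMeagre_of_isOpen (isOpen_set_pi finite_univ fun i _ => hU i)
      (univ_pi_nonempty_iff.2 hU') (hB.mono h)
  obtain ⟨u, hu, huB⟩ := not_subset.1 hUB
  exact ⟨u, fun i => hu i (mem_univ i), fun i j hij hD => huB (mem_iUnion.2 ⟨⟨(i, j), hij⟩, hD⟩)⟩

theorem exists_pairwise_separated_compacts {ι : Type*} [Finite ι] {U : ι → Set G}
    (hU : ∀ i, IsOpen (U i)) (hU' : ∀ i, (U i).Nonempty) {D : Set G} (hD : IsClosed D)
    (hD' : IsMeagre D) :
    ∃ K : ι → Set G, (∀ i, IsCompact (K i)) ∧ (∀ i, (interior (K i)).Nonempty) ∧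
      (∀ i, K i ⊆ U i) ∧ Pairwise fun i j => ∀ x ∈ K i, ∀ y ∈ K j, x⁻¹ * y ∉ D := by
  obtain ⟨u, hu, hsep⟩ := exists_pairwise_inv_mul_notMem hU hU' hD'
  have hnear : ∀ᶠ p : G × G in 𝓝 1 ×ˢ 𝓝 1,
      (∀ i, u i * p.1 ∈ U i) ∧ Pairwise fun i j => (u i * p.1)⁻¹ * (u j * p.2) ∉ D := by
    rw [← nhds_prod_eq]
    refine (eventually_all.2 fun i => ?_).and (eventually_all.2 fun i => eventually_all.2 fun j =>
      eventually_imp_distrib_left.2 fun hij => ?_)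
    · exact ContinuousAt.eventually_mem (by fun_prop) ((hU i).mem_nhds (by simpa using hu i))
    · exact ContinuousAt.eventually_mem (by fun_prop)
        (hD.isOpen_compl.mem_nhds (by simpa using hsep hij))
  obtain ⟨t, ht, htsep⟩ := (eventually_prod_self_iff (r := fun a b =>
    (∀ i, u i * a ∈ U i) ∧ Pairwise fun i j => (u i * a)⁻¹ * (u j * b) ∉ D)).1 hnear
  obtain ⟨C, hC, hCt, hCc⟩ := LocallyCompactSpace.local_compact_nhds 1 t ht
  refine ⟨fun i => u i • C, fun i => hCc.smul (u i), fun i => ?_, ?_, ?_⟩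
  · rw [interior_smul]
    exact ⟨u i • 1, smul_mem_smul_set (mem_interior_iff_mem_nhds.2 hC)⟩
  · rintro i _ ⟨a, ha, rfl⟩
    exact (htsep a (hCt ha) a (hCt ha)).1 i
  · rintro i j hij _ ⟨a, ha, rfl⟩ _ ⟨b, hb, rfl⟩
    exact (htsep a (hCt ha) b (hCt hb)).2 hij

theorem IsSeparatingScheme.exists_succ {A : ℕ → Set G} (hAc : ∀ n, IsClosed (A n))
    (hA : ∀ n, IsMeagre (A n)) {n : ℕ} {F : (ℕ → Bool) → Set G}
    (hF : IsSeparatingScheme A n F) :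
    ∃ F', IsSeparatingScheme A (n + 1) F' ∧ ∀ b, F' b ⊆ F b := by
  let ext : (Fin (n + 1) → Bool) → ℕ → Bool := fun s i => if h : i < n + 1 then s ⟨i, h⟩ else false
  let res : (ℕ → Bool) → Fin (n + 1) → Bool := fun b i => b i
  obtain ⟨K, hKc, hKi, hKF, hKsep⟩ := exists_pairwise_separated_compacts
    (fun s => isOpen_interior (s := F (ext s))) (fun s => hF.interior_nonempty _)
    (hAc (n + 1)) (hA (n + 1))
  refine ⟨fun b => K (res b), ⟨fun b => hKc _, fun b => hKi _, fun b b' hbb' => ?_, ?_⟩,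
    fun b => ?_⟩
  · exact congrArg K (funext fun i => hbb' i i.isLt)
  · rintro b b' ⟨i, hi, hbb'⟩
    exact hKsep fun h => hbb' (congrFun h ⟨i, hi⟩)
  · refine (hKF _).trans (interior_subset.trans (hF.eq_of_eqOn _ _ fun i hi => ?_).le)
    simp [ext, res, hi.le]

theorem exists_antitone_isSeparatingScheme {A : ℕ → Set G} (hAc : ∀ n, IsClosed (A n))
    (hA : ∀ n, IsMeagre (A n)) :
    ∃ F : ℕ → (ℕ → Bool) → Set G, ∀ n, IsSeparatingScheme A n (F n) ∧ ∀ b, F (n + 1) b ⊆ F n b := by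
  choose! next hnext using fun n (F : (ℕ → Bool) → Set G) (hF : IsSeparatingScheme A n F) =>
    hF.exists_succ hAc hA
  obtain ⟨F₀, hF₀⟩ := exists_isSeparatingScheme_zero A
  let F : ℕ → (ℕ → Bool) → Set G := fun n => Nat.rec F₀ next n
  have hF : ∀ n, IsSeparatingScheme A n (F n) := fun n =>
    Nat.rec hF₀ (fun n ih => (hnext n _ ih).1) n
  exact ⟨F, fun n => ⟨hF n, (hnext n _ (hF n)).2⟩⟩

variable [T2Space G]

theorem exists_pairwise_inv_mul_notMem_iUnion {A : ℕ → Set G} (hAc : ∀ n, IsClosed (A n))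
    (hA : ∀ n, IsMeagre (A n)) (hmono : Monotone A) :
    ∃ x : (ℕ → Bool) → G, Pairwise fun b b' => (x b)⁻¹ * x b' ∉ ⋃ n, A n := by
  obtain ⟨F, hF⟩ := exists_antitone_isSeparatingScheme hAc hA
  have hne : ∀ b, (⋂ n, F n b).Nonempty := fun b =>
    IsCompact.nonempty_iInter_of_sequence_nonempty_isCompact_isClosed (F · b)
      (fun n => (hF n).2 b) (fun n => ((hF n).1.interior_nonempty b).mono interior_subset)
      ((hF 0).1.isCompact b) (fun n => ((hF n).1.isCompact b).isClosed)
  choose x hx using hne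
  refine ⟨x, fun b b' hbb' => ?_⟩
  obtain ⟨i, hi⟩ := Function.ne_iff.1 hbb'
  simp only [mem_iUnion, not_exists]
  intro n hn
  have hm := (hF (max n (i + 1))).1.inv_mul_notMem b b' ⟨i, by omega, hi⟩
  exact hm _ (mem_iInter.1 (hx b) _) _ (mem_iInter.1 (hx b') _) (hmono (le_max_left _ _) hn)

theorem continuum_le_mk_quotient_of_subset_iUnion {S : Subgroup G} {A : ℕ → Set G}
    (hAc : ∀ n, IsClosed (A n)) (hA : ∀ n, IsNowhereDense (A n))
    (hS : (S : Set G) ⊆ ⋃ n, A n) : 𝔠 ≤ #(G ⧸ S) := by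
  have hAcc : ∀ n, IsClosed (accumulate A n) := fun n => by
    rw [accumulate_def]
    exact (finite_le_nat n).isClosed_biUnion fun k _ => hAc k
  have hAm : ∀ n, IsMeagre (accumulate A n) := fun n => by
    rw [accumulate_def]
    exact isMeagre_biUnion (finite_le_nat n).countable fun k _ => (hA k).isMeagre
  obtain ⟨x, hx⟩ := exists_pairwise_inv_mul_notMem_iUnion hAcc hAm (monotone_accumulate (s := A))
  have hinj : Function.Injective fun b => (x b : G ⧸ S) := fun b b' h => by
    by_contra hbb'
    exact hx hbb' ((iUnion_accumulate (s := A)).symm ▸ hS (QuotientGroup.eq.1 h))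
  simpa using lift_mk_le_lift_mk_of_injective hinj

end Scheme

theorem closed_graph_theorem
    {G : Type*} [TopologicalSpace G] [Group G] [IsTopologicalGroup G]
    [LocallyCompactSpace G] [T2Space G]
    {H : Type*} [TopologicalSpace H] [Group H] [IsTopologicalGroup H]
    [LocallyCompactSpace H] [T2Space H]
    (hG : SigmaCompactLtContinuum G) (hH : SigmaCompactLtContinuum H)
    (φ : G →* H) :
    Continuous φ ↔ IsClosed {p : G × H | p.2 = φ p.1} := by
  refine ⟨fun h => isClosed_eq continuous_snd (h.comp continuous_fst), fun hφ => ?_⟩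
  obtain ⟨K, hK, hKc, hKinv⟩ := exists_isCompact_inv_eq_mem_nhds_one G
  obtain ⟨L, hL, hLc, hLinv⟩ := exists_isCompact_inv_eq_mem_nhds_one H
  set V := K ∩ φ ⁻¹' L
  have hVc : IsCompact V := hKc.inter_preimage_of_isClosed_graph hφ hLc
  have hVinv : V⁻¹ = V := by
    ext x
    simp only [V, Set.mem_inv, mem_inter_iff, mem_preimage, map_inv]
    rw [← Set.mem_inv, hKinv, ← Set.mem_inv, hLinv]
  by_cases h : ∃ n, (interior (V ^ n)).Nonempty
  · obtain ⟨n, x, hx⟩ := h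
    refine φ.continuous_of_continuousAt (x := x) (continuousAt_of_isClosed_graph hφ (hLc.pow_s16 n) ?_)
    filter_upwards [mem_interior_iff_mem_nhds.1 hx] with g hg
    have hVL : φ '' V ⊆ L := image_subset_iff.2 inter_subset_right
    exact pow_subset_pow_left hVL (image_pow φ V n ▸ mem_image_of_mem φ hg)
  · push Not at h
    have hVn : ∀ n, IsNowhereDense (V ^ n) := fun n =>
      (hVc.pow_s16 n).isClosed.isNowhereDense_iff.2 (h n)
    have hlt := mk_quotient_lt_continuum_of_isClosed_graph hφ hG hH hK hL Subgroup.subset_closure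
    have hle := continuum_le_mk_quotient_of_subset_iUnion (fun n => (hVc.pow_s16 n).isClosed) hVn
      (Subgroup.coe_closure_subset_iUnion_pow hVinv)
    exact (hle.trans_lt hlt).false.elim
end
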